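/- Each of the four parallel double-SIC vectors s_i ⊗ s_i (i ∈ {1,2,3,4}) is orthogonal to the singlet Ψ⁻, the family {s_i ⊗ s_i : i ∈ {1,2,3,4}} is linearly dependent, and its span equals the 3-dimensional orthogonal complement of ℂ·Ψ⁻ in ℂ²⊗ℂ². (Hence, by Chefles' linear-independence criterion, the parallel double-SIC ensemble S^{↑↑} admits no conclusive global discrimination.) -/

import Mathlib

/-!
A vector `x ⊗ x` is symmetric under the swap of the two tensor factors, while `Ψ⁻` is
antisymmetric, so every `s_i ⊗ s_i` lies in `(ℂ·Ψ⁻)ᗮ`, the 3-dimensional space of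
symmetric vectors. Writing `ω = e^{2πi/3}`, the coordinates of `s_{k+2} ⊗ s_{k+2}` are
`(1, √2 ωᵏ, √2 ωᵏ, 2 ω²ᵏ) / 3`, so summing over `k` with `1 + ω + ω² = 0` gives
`∑_{j ≥ 2} s_j ⊗ s_j = s_1 ⊗ s_1`, while weighting by `ω⁻ᵏ` and `ω⁻²ᵏ`
(a discrete Fourier transform) isolates the other two symmetric basis vectors.
-/

noncomputable section
open scoped ComplexInnerProductSpace

/-- The qubit Hilbert space `ℂ²`. -/
abbrev Qubit : Type := EuclideanSpace ℂ (Fin 2)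

/-- The (Kronecker) tensor product of two vectors, realized in `EuclideanSpace ℂ (ι × κ)`. -/
def tp {ι κ : Type} (x : EuclideanSpace ℂ ι) (y : EuclideanSpace ℂ κ) :
    EuclideanSpace ℂ (ι × κ) :=
  (WithLp.equiv 2 (ι × κ → ℂ)).symm (fun p => x p.1 * y p.2)

/-- A qubit vector from its two coordinates. -/
def mk2 (a b : ℂ) : Qubit := (WithLp.equiv 2 (Fin 2 → ℂ)).symm ![a, b]

/-- The cube root of unity phases `ζ k = exp(2πik/3)`. -/
def ζ (k : ℤ) : ℂ := Complex.exp (2 * (Real.pi : ℂ) * Complex.I * (k : ℂ) / 3)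

/-- `1/√3` in `ℂ`. -/
def r3 : ℂ := ((Real.sqrt 3 : ℂ))⁻¹

/-- `√2` in `ℂ`. -/
def r2 : ℂ := (Real.sqrt 2 : ℂ)

/-- The qubit SIC states: `s 0 = |0⟩` and
`s j = (1/√3)(|0⟩ + √2 e^{2πi(j-1)/3} |1⟩)` for `j = 1, 2, 3`
(indexing the paper's `s_1, …, s_4` by `Fin 4`). -/
def s : Fin 4 → Qubit :=
  ![mk2 1 0,
    mk2 r3 (r3 * r2 * ζ 0),
    mk2 r3 (r3 * r2 * ζ 1),
    mk2 r3 (r3 * r2 * ζ 2)]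

/-- The singlet state `Ψ⁻ = (|01⟩ - |10⟩)/√2`. -/
def psiMinus : EuclideanSpace ℂ (Fin 2 × Fin 2) :=
  ((Real.sqrt 2 : ℂ))⁻¹ • (tp (mk2 1 0) (mk2 0 1) - tp (mk2 0 1) (mk2 1 0))

lemma zeta_zero : ζ 0 = 1 := by simp [ζ]

lemma zeta_two : ζ 2 = ζ 1 ^ 2 := by
  rw [ζ, ζ, ← Complex.exp_nat_mul]; congr 1; push_cast; ring

lemma isPrimitiveRoot_zeta_one : IsPrimitiveRoot (ζ 1) 3 := by
  convert Complex.isPrimitiveRoot_exp 3 (by norm_num) using 1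
  rw [ζ]; push_cast; ring_nf

lemma one_add_zeta_one_add_sq : 1 + ζ 1 + ζ 1 ^ 2 = 0 := by
  simpa [Finset.sum_range_succ] using isPrimitiveRoot_zeta_one.geom_sum_eq_zero (by norm_num)

lemma r3_sq : r3 ^ 2 = 3⁻¹ := by
  rw [r3, inv_pow, ← Complex.ofReal_pow, Real.sq_sqrt (by norm_num)]; norm_num

lemma r2_sq : r2 ^ 2 = 2 := by
  rw [r2, ← Complex.ofReal_pow, Real.sq_sqrt (by norm_num)]; norm_num

lemma psiMinus_ne_zero : psiMinus ≠ 0 := by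
  intro h
  simpa [psiMinus, tp, mk2] using congrArg (· (0, 1)) h

lemma mem_orthogonal_psiMinus_iff (v : EuclideanSpace ℂ (Fin 2 × Fin 2)) :
    v ∈ (ℂ ∙ psiMinus)ᗮ ↔ v (0, 1) = v (1, 0) := by
  rw [Submodule.mem_orthogonal_singleton_iff_inner_right, PiLp.inner_apply,
    Fintype.sum_prod_type]
  simp [Fin.sum_univ_two, psiMinus, tp, mk2, ← sub_eq_add_neg, ← sub_mul, sub_eq_zero]

lemma tp_self_mem_orthogonal_psiMinus (x : Qubit) : tp x x ∈ (ℂ ∙ psiMinus)ᗮ :=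
  (mem_orthogonal_psiMinus_iff _).mpr (mul_comm _ _)

lemma sum_tp_s_self_eq_zero :
    ∑ i, ![(-1 : ℂ), 1, 1, 1] i • tp (s i) (s i) = 0 := by
  have hω := one_add_zeta_one_add_sq
  ext ⟨i, j⟩
  fin_cases i <;> fin_cases j <;>
    simp only [tp, s, mk2, WithLp.equiv_symm_apply, zeta_zero, zeta_two, Fin.sum_univ_four,
      Fin.isValue, Fin.mk_one, Fin.zero_eta, Matrix.cons_val, Matrix.cons_val_zero,
      Matrix.cons_val_one, Matrix.cons_val_fin_one, PiLp.add_apply, PiLp.neg_apply,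
      PiLp.zero_apply, neg_smul, one_smul, mul_one, mul_zero, neg_zero, zero_add]
  · linear_combination 3 * r3_sq
  · linear_combination r3 ^ 2 * r2 * hω
  · linear_combination r3 ^ 2 * r2 * hω
  · linear_combination r3 ^ 2 * r2 ^ 2 * (1 + ζ 1 ^ 2 - ζ 1) * hω

lemma mem_span_tp_s_self_of_symm (v : EuclideanSpace ℂ (Fin 2 × Fin 2))
    (hv : v (0, 1) = v (1, 0)) :
    v ∈ Submodule.span ℂ (Set.range fun i : Fin 4 => tp (s i) (s i)) := by
  set a := v (0, 0)
  set b := v (0, 1)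
  set c := v (1, 1)
  have hω := one_add_zeta_one_add_sq
  rw [Submodule.mem_span_range_iff_exists_fun]
  refine ⟨![a, r2 * b / 2 + c / 2, r2 * b / 2 * ζ 1 ^ 2 + c / 2 * ζ 1,
    r2 * b / 2 * ζ 1 + c / 2 * ζ 1 ^ 2], ?_⟩
  ext ⟨i, j⟩
  fin_cases i <;> fin_cases j <;>
    simp only [tp, s, mk2, WithLp.equiv_symm_apply, zeta_zero, zeta_two, Fin.sum_univ_four,
      Fin.isValue, Fin.mk_one, Fin.zero_eta, Matrix.cons_val, Matrix.cons_val_zero,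
      Matrix.cons_val_one, Matrix.cons_val_fin_one, PiLp.add_apply, PiLp.smul_apply,
      smul_eq_mul, mul_one, mul_zero, zero_add, ← hv]
  · linear_combination r3 ^ 2 * (r2 * b / 2 + c / 2) * hω
  · linear_combination r3 ^ 2 * r2 * (r2 * b * (ζ 1 - 1) + c / 2 * (1 + ζ 1 ^ 2 - ζ 1)) * hω +
      3 / 2 * b * r2 ^ 2 * r3_sq + 1 / 2 * b * r2_sq
  · linear_combination r3 ^ 2 * r2 * (r2 * b * (ζ 1 - 1) + c / 2 * (1 + ζ 1 ^ 2 - ζ 1)) * hω +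
      3 / 2 * b * r2 ^ 2 * r3_sq + 1 / 2 * b * r2_sq
  · linear_combination r3 ^ 2 * r2 ^ 2 * (r2 * b / 2 * (1 + (ζ 1 + ζ 1 ^ 2) * (ζ 1 - 1)) +
      c / 2 * (ζ 1 - 1) * (ζ 1 ^ 3 + 2)) * hω + 3 / 2 * c * r2 ^ 2 * r3_sq + 1 / 2 * c * r2_sq

/-- The parallel double-SIC vectors are all orthogonal to `Ψ⁻`, linearly dependent,
and span the 3-dimensional orthogonal complement of `ℂ·Ψ⁻`. -/
theorem parallel_double_SIC_linearly_dependent :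
    (∀ i : Fin 4, ⟪tp (s i) (s i), psiMinus⟫ = 0) ∧
    ¬ LinearIndependent ℂ (fun i : Fin 4 => tp (s i) (s i)) ∧
    Module.finrank ℂ ↥((Submodule.span ℂ {psiMinus})ᗮ) = 3 ∧
    Submodule.span ℂ (Set.range fun i : Fin 4 => tp (s i) (s i)) =
      (Submodule.span ℂ {psiMinus})ᗮ := by
  refine ⟨fun i => ?orth, ?dep, ?finrank, ?span⟩
  case orth =>
    exact Submodule.mem_orthogonal_singleton_iff_inner_left.mp
      (tp_self_mem_orthogonal_psiMinus (s i))
  case dep =>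
    exact Fintype.not_linearIndependent_iff.mpr
      ⟨_, sum_tp_s_self_eq_zero, 0, by simp⟩
  case finrank =>
    have : Fact (Module.finrank ℂ (EuclideanSpace ℂ (Fin 2 × Fin 2)) = 3 + 1) := ⟨by simp⟩
    exact Submodule.finrank_orthogonal_span_singleton psiMinus_ne_zero
  case span =>
    refine le_antisymm ?_ fun v hv => ?_
    · exact Submodule.span_le.mpr (Set.range_subset_iff.mpr fun i =>
        tp_self_mem_orthogonal_psiMinus (s i))
    · exact mem_span_tp_s_self_of_symm v ((mem_orthogonal_psiMinus_iff v).mp hv)
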